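/- Let x ∈ {0,1}^n with |x|_0 = i, let p ∈ [0,1], and let X_1, …, X_m be i.i.d. copies of the one-bit-noise fitness of x on OneMax, where m = 2n^3 + 1. If p·i/n ≥ 1/2 + c/n for a constant c > 0, then the median of X_1, …, X_m equals n − i + 1 with probability at least 1 − 2·exp(−2c²n⁴/m). -/

import Mathlib

open MeasureTheory ENNReal

/-- The median of `m` real values: the `((m+1)/2)`-th smallest value for odd `m`, and the
average of the `(m/2)`-th and `(m/2+1)`-th smallest values for even `m`. -/
noncomputable def medianOf {m : ℕ} (v : Fin m → ℝ) : ℝ :=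
  let s := List.insertionSort (· ≤ ·) (List.ofFn v)
  if m % 2 = 1 then s.getD ((m - 1) / 2) 0
  else (s.getD (m / 2 - 1) 0 + s.getD (m / 2) 0) / 2

/-- One-bit noise on OneMax with parameter `p`, for a solution `x ∈ {0,1}ⁿ` with
`|x|₀ = i` zero-bits: the noisy fitness equals `n - i - 1` with probability `p(n-i)/n`,
`n - i` with probability `1 - p`, and `n - i + 1` with probability `p·i/n`. -/
noncomputable def oneBitNoiseDist (n : ℕ) (p : ℝ) (i : ℕ) : Measure ℝ :=
  ENNReal.ofReal (p * ((n : ℝ) - i) / n) • Measure.dirac ((n : ℝ) - i - 1)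
    + ENNReal.ofReal (1 - p) • Measure.dirac ((n : ℝ) - i)
    + ENNReal.ofReal (p * i / n) • Measure.dirac ((n : ℝ) - i + 1)

/-! The value `n - i + 1` is the largest one the noisy fitness can take, so the median of
the `m = 2n³ + 1` samples equals it as soon as more than `n³` samples do. Each sample hits it
independently with probability `q = p·i/n ≥ 1/2 + c/n`, hence `mq - n³ ≥ cn²`, and Hoeffding's
inequality bounds the probability of at most `n³` hits by
`exp(-2(mq - n³)²/m) ≤ exp(-2c²n⁴/m)`. -/

open Finset ProbabilityTheory
open scoped NNReal

theorem List.SortedLE.getElem_eq_of_forall_le {α : Type*} [LinearOrder α] {s : List α}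
    (hs : s.SortedLE) {a : α} (hle : ∀ x ∈ s, x ≤ a) {j : ℕ} (hj : j < s.length)
    (hcount : s.length - j ≤ s.count a) : s[j] = a := by
  refine le_antisymm (hle _ (s.getElem_mem hj)) (not_lt.1 fun hlt ↦ ?_)
  have hprefix : (s.take (j + 1)).count a = 0 := by
    refine List.count_eq_zero.2 fun hmem ↦ ?_
    obtain ⟨k, hk, rfl⟩ := List.mem_take_iff_getElem.1 hmem
    have : s[k] ≤ s[j] :=
      hs (Fin.mk_le_mk.2 (by omega) : (⟨k, by omega⟩ : Fin s.length) ≤ ⟨j, hj⟩)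
    exact this.not_gt hlt
  have hsplit := List.count_append (a := a) (l₁ := s.take (j + 1)) (l₂ := s.drop (j + 1))
  rw [List.take_append_drop, hprefix] at hsplit
  have hdrop := (s.drop (j + 1)).count_le_length (a := a)
  rw [List.length_drop] at hdrop
  omega

theorem List.count_ofFn {α : Type*} [DecidableEq α] {m : ℕ} (v : Fin m → α) (a : α) :
    (List.ofFn v).count a = #{k | v k = a} := by
  rw [← Multiset.coe_count, ← Fin.univ_val_map, Multiset.count_map]
  simp [Finset.card, Finset.filter_val, eq_comm]

theorem medianOf_eq_of_forall_le {m : ℕ} (hm : Odd m) (v : Fin m → ℝ) {a : ℝ}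
    (hle : ∀ k, v k ≤ a) (hcount : m / 2 < #{k | v k = a}) : medianOf v = a := by
  have hodd := Nat.odd_iff.1 hm
  set s := List.insertionSort (· ≤ ·) (List.ofFn v)
  have hperm : s.Perm (List.ofFn v) := List.perm_insertionSort _ _
  have hlen : s.length = m := by rw [hperm.length_eq, List.length_ofFn]
  have hj : (m - 1) / 2 < s.length := by omega
  rw [medianOf, if_pos hodd, List.getD_eq_getElem _ _ hj]
  refine List.sortedLE_insertionSort.getElem_eq_of_forall_le (fun x hx ↦ ?_) hj ?_
  · obtain ⟨k, rfl⟩ := List.mem_ofFn.1 (hperm.mem_iff.1 hx)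
    exact hle k
  · rw [hperm.count_eq, List.count_ofFn, hlen]
    omega

section Noise

variable {n i : ℕ} {p : ℝ}

theorem isProbabilityMeasure_oneBitNoiseDist (hn : 0 < n) (hi : i ≤ n) (hp0 : 0 ≤ p)
    (hp1 : p ≤ 1) : IsProbabilityMeasure (oneBitNoiseDist n p i) := by
  have hin : (i : ℝ) ≤ n := by exact_mod_cast hi
  have hn' : (n : ℝ) ≠ 0 := by positivity
  constructor
  simp only [oneBitNoiseDist, Measure.add_apply, Measure.smul_apply, measure_univ, smul_eq_mul,
    mul_one]
  have hfall : 0 ≤ p * (n - i) / n := by have := sub_nonneg.2 hin; positivity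
  rw [← ENNReal.ofReal_add hfall (by linarith),
    ← ENNReal.ofReal_add (by linarith) (by positivity), ← ENNReal.ofReal_one]
  congr 1
  field_simp
  ring

theorem oneBitNoiseDist_real_singleton_add_one (hp0 : 0 ≤ p) :
    (oneBitNoiseDist n p i).real {(n : ℝ) - i + 1} = p * i / n := by
  have h₁ : (n : ℝ) - i - 1 ∉ ({(n : ℝ) - i + 1} : Set ℝ) :=
    fun h ↦ by linarith [Set.mem_singleton_iff.1 h]
  have h₂ : (n : ℝ) - i ∉ ({(n : ℝ) - i + 1} : Set ℝ) := by simp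
  have h₃ : 0 ≤ p * i / n := by positivity
  simp [oneBitNoiseDist, measureReal_def, h₁, h₂, h₃]

theorem ae_oneBitNoiseDist_le : ∀ᵐ x ∂oneBitNoiseDist n p i, x ≤ (n : ℝ) - i + 1 := by
  simp only [oneBitNoiseDist, ae_add_measure_iff]
  refine ⟨⟨?_, ?_⟩, ?_⟩ <;>
    refine Measure.ae_smul_measure ((ae_dirac_iff measurableSet_Iic).2 ?_) _ <;> linarith

end Noise

section Hoeffding

variable {α : Type*} [MeasurableSpace α] (μ : Measure α) [IsProbabilityMeasure μ]
  {s : Set α}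

theorem hasSubgaussianMGF_measureReal_sub_indicator (hs : MeasurableSet s) :
    HasSubgaussianMGF (fun x ↦ μ.real s - s.indicator 1 x) (1 / 4) μ := by
  have h := hasSubgaussianMGF_of_mem_Icc_of_integral_eq_zero (μ := μ)
    (X := fun x ↦ μ.real s - s.indicator 1 x) (a := μ.real s - 1) (b := μ.real s)
    (by fun_prop) (ae_of_all _ fun x ↦ ?_) ?_
  · convert h using 1
    norm_num
  · by_cases hx : x ∈ s <;> simp [hx]
  · rw [integral_sub (integrable_const _) ((integrable_const 1).indicator hs),
      integral_indicator_one hs]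
    simp

theorem measureReal_pi_card_mem_le_le_exp [DecidablePred (· ∈ s)] (hs : MeasurableSet s)
    {m : ℕ} {t : ℝ} (ht : t ≤ m * μ.real s) :
    (Measure.pi fun _ : Fin m ↦ μ).real {v | (#{k | v k ∈ s} : ℝ) ≤ t} ≤
      Real.exp (-2 * (m * μ.real s - t) ^ 2 / m) := by
  set Y : Fin m → (Fin m → α) → ℝ := fun k v ↦ μ.real s - s.indicator 1 (v k)
  have hindep : iIndepFun Y (Measure.pi fun _ ↦ μ) :=
    iIndepFun_pi (Ω := fun _ : Fin m ↦ α) (μ := fun _ ↦ μ) (𝓧 := fun _ ↦ ℝ)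
      (X := fun _ x ↦ μ.real s - s.indicator 1 x) fun _ ↦ by fun_prop
  have hsubG (k : Fin m) : HasSubgaussianMGF (Y k) (1 / 4) (Measure.pi fun _ ↦ μ) := by
    refine HasSubgaussianMGF.of_map (μ := Measure.pi fun _ ↦ μ) (Y := Function.eval k)
      (X := fun x ↦ μ.real s - s.indicator 1 x) (measurable_pi_apply k).aemeasurable ?_
    rw [(measurePreserving_eval (fun _ ↦ μ) k).map_eq]
    exact hasSubgaussianMGF_measureReal_sub_indicator μ hs
  have hsum (v : Fin m → α) : ∑ k, Y k v = m * μ.real s - #{k | v k ∈ s} := by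
    simp [Y, Finset.sum_sub_distrib, Set.indicator_apply, Finset.sum_boole]
  calc (Measure.pi fun _ : Fin m ↦ μ).real {v | (#{k | v k ∈ s} : ℝ) ≤ t}
      = (Measure.pi fun _ : Fin m ↦ μ).real {v | m * μ.real s - t ≤ ∑ k, Y k v} := by
        congr with v
        rw [hsum, _root_.sub_le_sub_iff_left]
    _ ≤ Real.exp (-(m * μ.real s - t) ^ 2 / (2 * ∑ _k : Fin m, (1 / 4 : ℝ≥0))) :=
        HasSubgaussianMGF.measure_sum_ge_le_of_iIndepFun hindep (fun k _ ↦ hsubG k)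
          (sub_nonneg.2 ht)
    _ = Real.exp (-2 * (m * μ.real s - t) ^ 2 / m) := by
        congr 1
        simp only [sum_const, card_univ, Fintype.card_fin, nsmul_eq_mul, NNReal.coe_mul,
          NNReal.coe_natCast, NNReal.coe_div, NNReal.coe_one, NNReal.coe_ofNat]
        ring

end Hoeffding

theorem ofReal_one_sub_exp_le_measure_medianOf_eq_of_ae_le {μ : Measure ℝ}
    [IsProbabilityMeasure μ] {a : ℝ} (hle : ∀ᵐ x ∂μ, x ≤ a) {N : ℕ}
    (hN : N ≤ (2 * N + 1) * μ.real {a}) :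
    ENNReal.ofReal (1 - Real.exp (-2 * ((2 * N + 1) * μ.real {a} - N) ^ 2 / (2 * N + 1))) ≤
      (Measure.pi fun _ : Fin (2 * N + 1) ↦ μ) {v | medianOf v = a} := by
  set P := Measure.pi fun _ : Fin (2 * N + 1) ↦ μ
  set S := {v : Fin (2 * N + 1) → ℝ | (#{k | v k ∈ ({a} : Set ℝ)} : ℝ) ≤ N}
  have htail : P S ≤ ENNReal.ofReal
      (Real.exp (-2 * ((2 * N + 1) * μ.real {a} - N) ^ 2 / (2 * N + 1))) := by
    rw [← ofReal_measureReal]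
    refine ENNReal.ofReal_le_ofReal ?_
    have := measureReal_pi_card_mem_le_le_exp μ (measurableSet_singleton a) (m := 2 * N + 1)
      (t := N) (by push_cast; exact hN)
    push_cast at this
    exact this
  have hae : ∀ᵐ v ∂P, ∀ k, v k ≤ a :=
    ae_all_iff.2 fun _ ↦ (Measure.tendsto_eval_ae_ae (μ := fun _ ↦ μ)).eventually hle
  have hgood : Sᶜ ≤ᵐ[P] {v | medianOf v = a} := hae.mono fun v hv (hvS : v ∉ S) ↦ by
    refine medianOf_eq_of_forall_le (odd_two_mul_add_one N) v hv ?_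
    simp only [S, Set.mem_ofPred_eq, Set.mem_singleton_iff, not_le] at hvS
    have : N < #{k | v k = a} := by exact_mod_cast hvS
    omega
  calc ENNReal.ofReal (1 - Real.exp (-2 * ((2 * N + 1) * μ.real {a} - N) ^ 2 / (2 * N + 1)))
      = 1 - ENNReal.ofReal
          (Real.exp (-2 * ((2 * N + 1) * μ.real {a} - N) ^ 2 / (2 * N + 1))) := by
        rw [ENNReal.ofReal_sub _ (Real.exp_pos _).le, ENNReal.ofReal_one]
    _ ≤ 1 - P S := tsub_le_tsub_left htail 1
    _ ≤ P Sᶜ := by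
        rw [tsub_le_iff_left, ← measure_univ (μ := P)]
        exact measure_univ_le_add_compl S
    _ ≤ P {v | medianOf v = a} := measure_mono_ae hgood

theorem pow_three_add_mul_sq_le_of_half_add_div_le {n : ℕ} (hn : 0 < n) {c q : ℝ}
    (hc : 0 < c) (h : 1 / 2 + c / n ≤ q) : (n : ℝ) ^ 3 + c * n ^ 2 ≤ (2 * n ^ 3 + 1) * q := by
  have hn' : (0 : ℝ) < n := by exact_mod_cast hn
  have hexpand :
      (2 * (n : ℝ) ^ 3 + 1) * (1 / 2 + c / n) = n ^ 3 + 1 / 2 + 2 * c * n ^ 2 + c / n := by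
    field_simp
    ring
  have := mul_le_mul_of_nonneg_left h (by positivity : (0 : ℝ) ≤ 2 * n ^ 3 + 1)
  have : 0 ≤ c * (n : ℝ) ^ 2 := by positivity
  linarith [div_pos hc hn']

/-- Let `X₁, …, X_m` be i.i.d. copies of the one-bit-noise fitness of a solution with `i`
zero-bits, where `m = 2n³ + 1`. If `p·i/n ≥ 1/2 + c/n` for a constant `c > 0`, then the
median of `X₁, …, X_m` equals `n - i + 1` with probability at least
`1 - 2·exp(-2c²n⁴/m)`. -/
theorem median_onebit_noise_high (n i : ℕ) (hn : 0 < n) (hi : i ≤ n)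
    (p : ℝ) (hp0 : 0 ≤ p) (hp1 : p ≤ 1) (c : ℝ) (hc : 0 < c)
    (h : 1 / 2 + c / n ≤ p * i / n) :
    ENNReal.ofReal (1 - 2 * Real.exp (-2 * c ^ 2 * (n : ℝ) ^ 4 / (2 * (n : ℝ) ^ 3 + 1))) ≤
      (Measure.pi fun _ : Fin (2 * n ^ 3 + 1) => oneBitNoiseDist n p i)
        {v | medianOf v = (n : ℝ) - i + 1} := by
  have := isProbabilityMeasure_oneBitNoiseDist hn hi hp0 hp1
  have hq := oneBitNoiseDist_real_singleton_add_one (n := n) (i := i) hp0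
  have hdev := pow_three_add_mul_sq_le_of_half_add_div_le hn hc h
  have hmedian := ofReal_one_sub_exp_le_measure_medianOf_eq_of_ae_le ae_oneBitNoiseDist_le
    (N := n ^ 3) (by rw [hq]; push_cast; linarith [(by positivity : 0 ≤ c * (n : ℝ) ^ 2)])
  push_cast at hmedian
  refine le_trans (ENNReal.ofReal_le_ofReal ?_) hmedian
  rw [hq]
  have hexponent :
      -2 * ((2 * (n : ℝ) ^ 3 + 1) * (p * i / n) - n ^ 3) ^ 2 ≤ -2 * c ^ 2 * n ^ 4 := by
    nlinarith [pow_le_pow_left₀ (by positivity) (le_sub_iff_add_le'.2 hdev) 2]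
  have := Real.exp_le_exp.2 (div_le_div_of_nonneg_right hexponent
    (by positivity : (0 : ℝ) ≤ 2 * n ^ 3 + 1))
  linarith [Real.exp_pos (-2 * c ^ 2 * (n : ℝ) ^ 4 / (2 * (n : ℝ) ^ 3 + 1))]
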